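/- arXiv:math/0202041 — 4 statements merged into one kernel-verified Lean document; each statement's English description precedes it below -/
import Mathlib

section
/- The polynomial algebra K[x_1,...,x_n] equipped with the Jacobian bracket [a_1,...,a_n] = det(∂_i(a_j)) is an n-Lie algebra, i.e. the Jacobian determinant map is alternating n-linear and satisfies the Filippov identity. -/
open MvPolynomial

/-- The Jacobian bracket `[a_1,…,a_n] = det (∂a_j/∂x_i)` on `K[x_1,…,x_n]`, `n = m + 1`. -/
noncomputable def jacobianBracket {K : Type*} [CommRing K] (m : ℕ)
    (a : Fin (m + 1) → MvPolynomial (Fin (m + 1)) K) : MvPolynomial (Fin (m + 1)) K :=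
  (Matrix.of fun i j => MvPolynomial.pderiv i (a j)).det

/-!
Expanding `[a₁, …, aₙ₋₁, f]` along its last column shows that `f ↦ [a₁, …, aₙ₋₁, f]` is the
derivation `D = ∑ₖ Aₖ ∂ₖ`, where `A` is the last row of the adjugate of the Jacobian matrix
of `(a₁, …, aₙ₋₁, 0)`. By the Piola identity this vector field is divergence-free. The
Filippov identity says that `D` is a derivation of the bracket. For `M` the Jacobian matrix of
`b`, Jacobi's formula gives `D (det M) = tr (adj M · D M)`, and
`D (∂ᵣ bᵢ) = ∂ᵣ (D bᵢ) - ∑ₖ ∂ᵣAₖ · ∂ₖbᵢ`; the first part gives `∑ᵢ [b₁, …, D bᵢ, …, bₙ]`,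
the second `tr (adj M · J_A · M) = det M · div A = 0`.
Multilinearity and alternation are those of the determinant.
-/

namespace Matrix

variable {R n : Type*} [CommRing R] [Fintype n] [DecidableEq n]

theorem det_updateCol_eq_sum_adjugate_mul (M : Matrix n n R) (j : n) (v : n → R) :
    (M.updateCol j v).det = ∑ k, M.adjugate j k * v k := by
  rw [← cramer_apply, cramer_eq_adjugate_mulVec]
  rfl

theorem trace_adjugate_mul (M N : Matrix n n R) :
    (M.adjugate * N).trace = ∑ j, (M.updateCol j fun i => N i j).det := by
  simp only [trace, diag, mul_apply, det_updateCol_eq_sum_adjugate_mul]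

end Matrix

namespace Derivation

theorem leibniz_finset_prod {R A M ι : Type*} [CommSemiring R] [CommSemiring A]
    [Algebra R A] [AddCommMonoid M] [Module A M] [Module R M] [IsScalarTower R A M]
    [DecidableEq ι] (D : Derivation R A M) (s : Finset ι) (f : ι → A) :
    D (∏ i ∈ s, f i) = ∑ i ∈ s, (∏ j ∈ s.erase i, f j) • D (f i) := by
  induction s using Finset.induction_on with
  | empty => simp
  | insert a s ha ih =>
    rw [Finset.prod_insert ha, D.leibniz, ih, Finset.sum_insert ha, Finset.erase_insert ha,
      Finset.smul_sum, add_comm]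
    congr 1
    refine Finset.sum_congr rfl fun i hi => ?_
    rw [Finset.erase_insert_of_ne (ne_of_mem_of_not_mem hi ha).symm,
      Finset.prod_insert fun h => ha (Finset.mem_of_mem_erase h), mul_smul]

variable {R A n : Type*} [CommSemiring R] [CommRing A] [Algebra R A] [Fintype n] [DecidableEq n]

theorem map_det_eq_sum_det_updateCol (D : Derivation R A A) (M : Matrix n n A) :
    D M.det = ∑ j, (M.updateCol j fun i => D (M i j)).det := by
  simp only [Matrix.det_apply, map_sum, Units.smul_def, map_zsmul, D.leibniz_finset_prod,
    Finset.smul_sum]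
  rw [Finset.sum_comm]
  refine Finset.sum_congr rfl fun j _ => Finset.sum_congr rfl fun σ _ => ?_
  rw [← Finset.mul_prod_erase _ _ (Finset.mem_univ j), Matrix.updateCol_self, smul_eq_mul,
    mul_comm]
  congr 2
  exact Finset.prod_congr rfl fun i hi => (Matrix.updateCol_ne (Finset.ne_of_mem_erase hi)).symm

theorem map_det (D : Derivation R A A) (M : Matrix n n A) :
    D M.det = (M.adjugate * M.map D).trace := by
  rw [D.map_det_eq_sum_det_updateCol, Matrix.trace_adjugate_mul]
  rfl

end Derivation

theorem Fintype.sum_sum_mul_eq_zero_of_alt_of_symm {R ι : Type*} [CommRing R] [Fintype ι]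
    (ω H : ι → ι → R) (hω : ∀ s k, ω s k = -ω k s) (hω₀ : ∀ k, ω k k = 0)
    (hH : ∀ s k, H s k = H k s) : ∑ s, ∑ k, ω s k * H s k = 0 := by
  rw [← Fintype.sum_prod_type']
  refine Finset.sum_ninvolution Prod.swap (fun x => ?_) (fun x hx hswap => ?_)
    (fun _ => Finset.mem_univ _) (fun _ => rfl)
  · simp only [Prod.fst_swap, Prod.snd_swap, hH x.2 x.1, hω x.2 x.1]
    ring
  · obtain ⟨s, k⟩ := x
    obtain rfl : k = s := congrArg Prod.fst hswap
    exact hx (by rw [hω₀, zero_mul])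

namespace MvPolynomial

variable {R σ : Type*} [CommRing R]

theorem pderiv_comm (i j : σ) (f : MvPolynomial σ R) :
    pderiv i (pderiv j f) = pderiv j (pderiv i f) := by
  classical
  have hcommutator :
      ⁅pderiv i, pderiv j⁆ = (0 : Derivation R (MvPolynomial σ R) (MvPolynomial σ R)) :=
    derivation_ext fun k => by
      rw [Derivation.commutator_apply]
      simp only [pderiv_X, Pi.single_apply]
      split_ifs <;> simp
  rw [← sub_eq_zero, ← Derivation.commutator_apply, hcommutator, Derivation.zero_apply]

noncomputable def jacobianMatrix {ι : Type*} (b : ι → MvPolynomial σ R) :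
    Matrix σ ι (MvPolynomial σ R) :=
  Matrix.of fun i j => pderiv i (b j)

theorem jacobianMatrix_update {ι : Type*} [DecidableEq ι] (b : ι → MvPolynomial σ R) (i : ι)
    (f : MvPolynomial σ R) :
    jacobianMatrix (Function.update b i f) =
      (jacobianMatrix b).updateCol i fun r => pderiv r f := by
  ext r j
  rcases eq_or_ne j i with rfl | hj
  · simp [jacobianMatrix]
  · simp [jacobianMatrix, hj]

variable [Fintype σ]

theorem trace_jacobianMatrix (A : σ → MvPolynomial σ R) :
    (jacobianMatrix A).trace = ∑ k, pderiv k (A k) :=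
  rfl

noncomputable def vectorFieldDerivation (A : σ → MvPolynomial σ R) :
    Derivation R (MvPolynomial σ R) (MvPolynomial σ R) :=
  ∑ k, A k • pderiv k

theorem vectorFieldDerivation_apply (A : σ → MvPolynomial σ R) (f : MvPolynomial σ R) :
    vectorFieldDerivation A f = ∑ k, A k * pderiv k f := by
  rw [vectorFieldDerivation, ← Derivation.coeFnAddMonoidHom_apply, map_sum, Finset.sum_apply]
  rfl

theorem pderiv_vectorFieldDerivation (A : σ → MvPolynomial σ R) (r : σ) (f : MvPolynomial σ R) :
    pderiv r (vectorFieldDerivation A f) =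
      vectorFieldDerivation A (pderiv r f) + ∑ k, pderiv r (A k) * pderiv k f := by
  simp only [vectorFieldDerivation_apply, map_sum, pderiv_mul, Finset.sum_add_distrib,
    pderiv_comm r]
  rw [add_comm]

theorem jacobianMatrix_map_vectorFieldDerivation {ι : Type*} (A : σ → MvPolynomial σ R)
    (b : ι → MvPolynomial σ R) :
    (jacobianMatrix b).map (vectorFieldDerivation A) =
      jacobianMatrix (fun i => vectorFieldDerivation A (b i)) -
        jacobianMatrix A * jacobianMatrix b := by
  ext r i
  simp [jacobianMatrix, Matrix.mul_apply, pderiv_vectorFieldDerivation]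

variable [DecidableEq σ]

theorem det_jacobianMatrix_update (b : σ → MvPolynomial σ R) (i : σ) (f : MvPolynomial σ R) :
    (jacobianMatrix (Function.update b i f)).det =
      ∑ k, (jacobianMatrix b).adjugate i k * pderiv k f := by
  rw [jacobianMatrix_update, Matrix.det_updateCol_eq_sum_adjugate_mul]

theorem adjugate_jacobianMatrix_apply (b : σ → MvPolynomial σ R) (i k : σ) :
    (jacobianMatrix b).adjugate i k = (jacobianMatrix (Function.update b i (X k))).det := by
  simp [det_jacobianMatrix_update, pderiv_X, Pi.single_apply]

theorem det_jacobianMatrix_comp_perm (b : σ → MvPolynomial σ R) (e : Equiv.Perm σ) :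
    (jacobianMatrix (b ∘ e)).det = Equiv.Perm.sign e * (jacobianMatrix b).det :=
  Matrix.det_permute' e (jacobianMatrix b)

theorem det_jacobianMatrix_eq_zero_of_eq (b : σ → MvPolynomial σ R) {i j : σ} (hij : i ≠ j)
    (h : b i = b j) : (jacobianMatrix b).det = 0 :=
  Matrix.det_zero_of_column_eq hij fun r => by simp [jacobianMatrix, h]

theorem det_jacobianMatrix_update_update_swap (b : σ → MvPolynomial σ R) {i j : σ}
    (hij : i ≠ j) (f g : MvPolynomial σ R) :
    (jacobianMatrix (Function.update (Function.update b i f) j g)).det =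
      -(jacobianMatrix (Function.update (Function.update b i g) j f)).det := by
  have hswap : Function.update (Function.update b i g) j f ∘ Equiv.swap i j =
      Function.update (Function.update b i f) j g := by
    ext r
    rcases eq_or_ne r i with rfl | hri
    · simp [hij]
    rcases eq_or_ne r j with rfl | hrj
    · simp [hij]
    · simp [Equiv.swap_apply_of_ne_of_ne hri hrj, hri, hrj]
  rw [← hswap, det_jacobianMatrix_comp_perm, Equiv.Perm.sign_swap hij]
  simp

theorem pderiv_det_jacobianMatrix (k : σ) (b : σ → MvPolynomial σ R) :
    pderiv k (jacobianMatrix b).det =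
      ∑ l, (jacobianMatrix (Function.update b l (pderiv k (b l)))).det := by
  simp only [Derivation.map_det_eq_sum_det_updateCol, jacobianMatrix_update]
  simp [jacobianMatrix, pderiv_comm k]

/-- The Piola identity. The divergence of a row of cofactors is a sum of terms that are
alternating in one pair of indices and, by equality of mixed partials, symmetric in it. -/
theorem trace_jacobianMatrix_adjugate (b : σ → MvPolynomial σ R) (j : σ) :
    (jacobianMatrix ((jacobianMatrix b).adjugate j)).trace = 0 := by
  simp only [trace_jacobianMatrix, adjugate_jacobianMatrix_apply, pderiv_det_jacobianMatrix]
  rw [Finset.sum_comm]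
  refine Finset.sum_eq_zero fun l _ => ?_
  rcases eq_or_ne l j with rfl | hlj
  · refine Finset.sum_eq_zero fun k _ => ?_
    simp [det_jacobianMatrix_update]
  · simp_rw [Function.update_of_ne hlj, det_jacobianMatrix_update]
    simp_rw [adjugate_jacobianMatrix_apply]
    rw [Finset.sum_comm]
    exact Fintype.sum_sum_mul_eq_zero_of_alt_of_symm _ _
      (fun s k => det_jacobianMatrix_update_update_swap b hlj.symm _ _)
      (fun k => det_jacobianMatrix_eq_zero_of_eq _ hlj.symm (by simp [hlj.symm]))
      (fun s k => pderiv_comm s k (b l))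

theorem vectorFieldDerivation_det_jacobianMatrix {A : σ → MvPolynomial σ R}
    (hA : (jacobianMatrix A).trace = 0) (b : σ → MvPolynomial σ R) :
    vectorFieldDerivation A (jacobianMatrix b).det =
      ∑ i, (jacobianMatrix (Function.update b i (vectorFieldDerivation A (b i)))).det := by
  set M := jacobianMatrix b
  have hdefect : (M.adjugate * (jacobianMatrix A * M)).trace = 0 := by
    rw [Matrix.trace_mul_comm, Matrix.mul_assoc, Matrix.mul_adjugate, Matrix.mul_smul,
      Matrix.mul_one, Matrix.trace_smul, hA, smul_zero]
  rw [Derivation.map_det, jacobianMatrix_map_vectorFieldDerivation, Matrix.mul_sub,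
    Matrix.trace_sub, hdefect, sub_zero, Matrix.trace_adjugate_mul]
  simp only [jacobianMatrix_update]
  rfl

end MvPolynomial

theorem jacobianBracket_eq_det {K : Type*} [CommRing K] (m : ℕ)
    (a : Fin (m + 1) → MvPolynomial (Fin (m + 1)) K) :
    jacobianBracket m a = (jacobianMatrix a).det :=
  rfl

theorem jacobianBracket_snoc {K : Type*} [CommRing K] {m : ℕ}
    (a : Fin m → MvPolynomial (Fin (m + 1)) K) (f : MvPolynomial (Fin (m + 1)) K) :
    jacobianBracket m (Fin.snoc a f) =
      vectorFieldDerivation ((jacobianMatrix (Fin.snoc a 0)).adjugate (Fin.last m)) f := by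
  rw [jacobianBracket_eq_det,
    ← Fin.update_snoc_last (α := fun _ => MvPolynomial (Fin (m + 1)) K) (x := 0) (p := a),
    det_jacobianMatrix_update, vectorFieldDerivation_apply]

theorem stmt_3_general {K : Type*} [Field K] (m : ℕ) :
    (∀ (a : Fin (m + 1) → MvPolynomial (Fin (m + 1)) K) (i : Fin (m + 1)) (c : K)
        (x y : MvPolynomial (Fin (m + 1)) K),
      jacobianBracket m (Function.update a i (c • x + y)) =
        c • jacobianBracket m (Function.update a i x) +
          jacobianBracket m (Function.update a i y)) ∧
    (∀ (a : Fin (m + 1) → MvPolynomial (Fin (m + 1)) K) (i j : Fin (m + 1)),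
      i ≠ j → a i = a j → jacobianBracket m a = 0) ∧
    (∀ (a : Fin m → MvPolynomial (Fin (m + 1)) K)
        (b : Fin (m + 1) → MvPolynomial (Fin (m + 1)) K),
      jacobianBracket m (Fin.snoc a (jacobianBracket m b)) =
        ∑ i : Fin (m + 1),
          jacobianBracket m
            (Function.update b i (jacobianBracket m (Fin.snoc a (b i))))) := by
  refine ⟨fun a i c x y => ?_, fun a i j hij h => det_jacobianMatrix_eq_zero_of_eq a hij h,
    fun a b => ?_⟩
  · simp only [jacobianBracket_eq_det, det_jacobianMatrix_update, map_add, Derivation.map_smul,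
      mul_add, Finset.sum_add_distrib, mul_smul_comm, Finset.smul_sum]
  · simp only [jacobianBracket_snoc]
    exact vectorFieldDerivation_det_jacobianMatrix (trace_jacobianMatrix_adjugate _ _) b

/-- The polynomial algebra `K[x_1,…,x_n]` (char `K = 0`, `n = m + 1`)
equipped with the Jacobian bracket is an `n`-Lie algebra: the Jacobian determinant map is
`n`-linear, alternating, and satisfies the Filippov identity. -/
theorem stmt_3 {K : Type*} [Field K] [CharZero K] (m : ℕ) :
    (∀ (a : Fin (m + 1) → MvPolynomial (Fin (m + 1)) K) (i : Fin (m + 1)) (c : K)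
        (x y : MvPolynomial (Fin (m + 1)) K),
      jacobianBracket m (Function.update a i (c • x + y)) =
        c • jacobianBracket m (Function.update a i x) +
          jacobianBracket m (Function.update a i y)) ∧
    (∀ (a : Fin (m + 1) → MvPolynomial (Fin (m + 1)) K) (i j : Fin (m + 1)),
      i ≠ j → a i = a j → jacobianBracket m a = 0) ∧
    (∀ (a : Fin m → MvPolynomial (Fin (m + 1)) K)
        (b : Fin (m + 1) → MvPolynomial (Fin (m + 1)) K),
      jacobianBracket m (Fin.snoc a (jacobianBracket m b)) =
        ∑ i : Fin (m + 1),
          jacobianBracket m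
            (Function.update b i (jacobianBracket m (Fin.snoc a (b i))))) :=
  stmt_3_general m
end

section
/- In U(so_{n+1}), for distinct indices i,j,s,k one has the identity R_{ijsk} = −e_{ij}[e_{is},e_{ik}] − e_{is}[e_{ik},e_{ij}] − e_{ik}[e_{ij},e_{is}]. -/
open Matrix

/-- `e_{ij} = E_{ij} - E_{ji}` as an element of the Lie algebra `so_m` of skew-symmetric
complex matrices. -/
def soE (m : ℕ) (i j : Fin m) :
    ↥(skewAdjointMatricesLieSubalgebra (1 : Matrix (Fin m) (Fin m) ℂ)) :=
  ⟨Matrix.single i j 1 - Matrix.single j i 1, by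
    rw [mem_skewAdjointMatricesLieSubalgebra, mem_skewAdjointMatricesSubmodule]
    show _ᵀ * 1 = 1 * -_
    ext a b
    simp [Matrix.single, Matrix.transpose_apply, Matrix.sub_apply]
    by_cases h1 : i = b <;> by_cases h2 : j = a <;> by_cases h3 : j = b <;>
      by_cases h4 : i = a <;> simp [h1, h2, h3, h4] <;> aesop⟩

/-- `R_{ijsk} = e_{ij} e_{sk} + e_{is} e_{kj} + e_{ik} e_{js}` in `U(so_{n+1})`. -/
noncomputable def REl (n : ℕ) (i j s k : Fin (n + 1)) :
    UniversalEnvelopingAlgebra ℂ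
      ↥(skewAdjointMatricesLieSubalgebra (1 : Matrix (Fin (n + 1)) (Fin (n + 1)) ℂ)) :=
  UniversalEnvelopingAlgebra.ι ℂ (soE (n + 1) i j) * UniversalEnvelopingAlgebra.ι ℂ (soE (n + 1) s k) +
  UniversalEnvelopingAlgebra.ι ℂ (soE (n + 1) i s) * UniversalEnvelopingAlgebra.ι ℂ (soE (n + 1) k j) +
  UniversalEnvelopingAlgebra.ι ℂ (soE (n + 1) i k) * UniversalEnvelopingAlgebra.ι ℂ (soE (n + 1) j s)

@[simp]
lemma soE_self (m : ℕ) (i : Fin m) : soE m i i = 0 :=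
  Subtype.ext (sub_self _)

lemma soE_lie_soE_of_ne {m : ℕ} {i s k : Fin m} (his : i ≠ s) (hik : i ≠ k) :
    ⁅soE m i s, soE m i k⁆ = -soE m s k := by
  obtain rfl | hsk := eq_or_ne s k
  · simp
  apply Subtype.ext
  show ⁅(_ : Matrix (Fin m) (Fin m) ℂ), _⁆ = _
  simp only [Ring.lie_def, soE, NegMemClass.coe_neg, mul_sub, sub_mul, single_mul_single_same,
    single_mul_single_of_ne, ne_eq, his, hik, hsk, his.symm, hik.symm, hsk.symm,
    not_false_iff, one_mul]
  abel

theorem stmt_7_general (n : ℕ) (i j s k : Fin (n + 1))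
    (hij : i ≠ j) (his : i ≠ s) (hik : i ≠ k) :
    REl n i j s k =
      -(UniversalEnvelopingAlgebra.ι ℂ (soE (n + 1) i j) *
          UniversalEnvelopingAlgebra.ι ℂ ⁅soE (n + 1) i s, soE (n + 1) i k⁆) -
        UniversalEnvelopingAlgebra.ι ℂ (soE (n + 1) i s) *
          UniversalEnvelopingAlgebra.ι ℂ ⁅soE (n + 1) i k, soE (n + 1) i j⁆ -
        UniversalEnvelopingAlgebra.ι ℂ (soE (n + 1) i k) *
          UniversalEnvelopingAlgebra.ι ℂ ⁅soE (n + 1) i j, soE (n + 1) i s⁆ := by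
  simp only [soE_lie_soE_of_ne his hik, soE_lie_soE_of_ne hik hij, soE_lie_soE_of_ne hij his,
    map_neg, mul_neg, neg_neg, sub_neg_eq_add, REl]

/-- In `U(so_{n+1})`, for pairwise distinct indices `i, j, s, k` one has
`R_{ijsk} = -e_{ij}[e_{is},e_{ik}] - e_{is}[e_{ik},e_{ij}] - e_{ik}[e_{ij},e_{is}]`, where
the products are taken in `U(so_{n+1})` and `[·,·]` is the Lie bracket of `so_{n+1}`. -/
theorem stmt_7 (n : ℕ) (i j s k : Fin (n + 1))
    (hij : i ≠ j) (his : i ≠ s) (hik : i ≠ k) (hjs : j ≠ s) (hjk : j ≠ k) (hsk : s ≠ k) :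
    REl n i j s k =
      -(UniversalEnvelopingAlgebra.ι ℂ (soE (n + 1) i j) *
          UniversalEnvelopingAlgebra.ι ℂ ⁅soE (n + 1) i s, soE (n + 1) i k⁆) -
        UniversalEnvelopingAlgebra.ι ℂ (soE (n + 1) i s) *
          UniversalEnvelopingAlgebra.ι ℂ ⁅soE (n + 1) i k, soE (n + 1) i j⁆ -
        UniversalEnvelopingAlgebra.ι ℂ (soE (n + 1) i k) *
          UniversalEnvelopingAlgebra.ι ℂ ⁅soE (n + 1) i j, soE (n + 1) i s⁆ :=
  stmt_7_general n i j s k hij his hik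
end

section
/- Let V_n be the vector products n-Lie algebra over ℂ. Realize so_{n+1} as derivations e_{ij} = x_i∂_j − x_j∂_i of ℂ[x_1,...,x_{n+1}], acting on the space M_t of homogeneous polynomials of degree t. Then for all indices 1 ≤ i ≤ n+1, 1 ≤ j < s < k ≤ n+1 with i ∉ {j,s,k}, the operator R_{ijsk} = e_{ij}e_{sk} + e_{is}e_{kj} + e_{ik}e_{js} annihilates every homogeneous polynomial of degree t. -/
open MvPolynomial

lemma pderiv_comm' {σ R : Type*} [CommSemiring R] (i j : σ) (f : MvPolynomial σ R) :
    pderiv i (pderiv j f) = pderiv j (pderiv i f) := by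
  induction f using MvPolynomial.induction_on with
  | C a => simp
  | add p q hp hq => simp [hp, hq]
  | mul_X p m hp =>
    classical
    simp only [pderiv_mul, pderiv_X, map_add, hp, smul_eq_mul, map_mul, Pi.single_apply]
    split_ifs <;> simp [hp] <;> ring

/-- The derivation `e_{ij} = x_i ∂_j - x_j ∂_i` acting on `ℂ[x_1, …, x_{n+1}]`. -/
noncomputable def eop (n : ℕ) (i j : Fin (n + 1)) (f : MvPolynomial (Fin (n + 1)) ℂ) :
    MvPolynomial (Fin (n + 1)) ℂ :=
  X i * pderiv j f - X j * pderiv i f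

/-- The operator `R_{ijsk} = e_{ij}∘e_{sk} + e_{is}∘e_{kj} + e_{ik}∘e_{js}`
(note `e_{kj} = -e_{jk}`). -/
noncomputable def Rop (n : ℕ) (i j s k : Fin (n + 1)) (f : MvPolynomial (Fin (n + 1)) ℂ) :
    MvPolynomial (Fin (n + 1)) ℂ :=
  eop n i j (eop n s k f) + eop n i s (eop n k j f) + eop n i k (eop n j s f)

/-- Realizing `so_{n+1}` by the derivations `e_{ij} = x_i∂_j - x_j∂_i`
acting on homogeneous polynomials of degree `t` in `ℂ[x_1,…,x_{n+1}]`: for all indices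
`i ∉ {j, s, k}` with `j < s < k`, the operator `R_{ijsk}` annihilates every homogeneous
polynomial of degree `t`. -/
theorem stmt_10 (n t : ℕ) (i j s k : Fin (n + 1))
    (hjs : j < s) (hsk : s < k) (hij : i ≠ j) (his : i ≠ s) (hik : i ≠ k)
    (f : MvPolynomial (Fin (n + 1)) ℂ) (hf : f.IsHomogeneous t) :
    Rop n i j s k f = 0 := by
  have hjk : j ≠ k := (hjs.trans hsk).ne
  have hjs' : j ≠ s := hjs.ne
  have hsk' : s ≠ k := hsk.ne
  simp only [Rop, eop, map_sub, pderiv_mul, pderiv_X_of_ne hij.symm,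
    pderiv_X_of_ne his.symm, pderiv_X_of_ne hik.symm,
    pderiv_X_of_ne hij, pderiv_X_of_ne his, pderiv_X_of_ne hik,
    pderiv_X_of_ne hjs', pderiv_X_of_ne hjs'.symm,
    pderiv_X_of_ne hsk', pderiv_X_of_ne hsk'.symm,
    pderiv_X_of_ne hjk, pderiv_X_of_ne hjk.symm,
    smul_eq_mul, zero_mul, mul_zero, zero_add, add_zero, sub_zero, zero_sub]
  rw [pderiv_comm' j k, pderiv_comm' j s, pderiv_comm' s k]
  ring
end

section
/- In the so_{n+1}-action on polynomials by e_{ij} = x_i∂_j − x_j∂_i, for any pairwise distinct indices i,j,s,k the operator R_{ijsk} = e_{ij}e_{sk} + e_{is}e_{kj} + e_{ik}e_{js} satisfies the Leibniz-type factorization R_{ijsk}(v·w) = R_{ijsk}(v)·w whenever w is a polynomial in the variables x_l with l ∉ {i,j,s,k}. -/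
open MvPolynomial

lemma eop_mul (n : ℕ) (a b : Fin (n + 1)) (v w : MvPolynomial (Fin (n + 1)) ℂ)
    (ha : pderiv a w = 0) (hb : pderiv b w = 0) :
    eop n a b (v * w) = eop n a b v * w := by
  simp only [eop, pderiv_mul, ha, hb, mul_zero, add_zero]
  ring

/-- In the `so_{n+1}`-action on polynomials by `e_{ij} = x_i∂_j - x_j∂_i`,
for pairwise distinct `i, j, s, k` the operator `R_{ijsk}` satisfies the Leibniz-type
factorization `R_{ijsk}(v·w) = R_{ijsk}(v)·w` whenever `w` is a polynomial only in the
variables `x_l` with `l ∉ {i, j, s, k}`. -/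
theorem stmt_11 (n : ℕ) (i j s k : Fin (n + 1))
    (hij : i ≠ j) (his : i ≠ s) (hik : i ≠ k) (hjs : j ≠ s) (hjk : j ≠ k) (hsk : s ≠ k)
    (v w : MvPolynomial (Fin (n + 1)) ℂ)
    (hw : w ∈ MvPolynomial.supported ℂ {l : Fin (n + 1) | l ≠ i ∧ l ≠ j ∧ l ≠ s ∧ l ≠ k}) :
    Rop n i j s k (v * w) = Rop n i j s k v * w := by
  rw [mem_supported] at hw
  have hvar : ∀ a : Fin (n + 1), a = i ∨ a = j ∨ a = s ∨ a = k → pderiv a w = 0 := by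
    intro a ha
    apply pderiv_eq_zero_of_notMem_vars
    intro hmem
    have := hw hmem
    simp only [Set.mem_setOf_eq] at this
    rcases ha with h | h | h | h <;> subst h <;> tauto
  have hi := hvar i (Or.inl rfl)
  have hj := hvar j (Or.inr (Or.inl rfl))
  have hs := hvar s (Or.inr (Or.inr (Or.inl rfl)))
  have hk := hvar k (Or.inr (Or.inr (Or.inr rfl)))
  simp only [Rop, eop_mul n _ _ _ w, eop_mul n s k v w hs hk, eop_mul n k j v w hk hj,
    eop_mul n j s v w hj hs, eop_mul n i j _ w hi hj, eop_mul n i s _ w hi hs,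
    eop_mul n i k _ w hi hk, add_mul]
end
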